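/- Let (A, μ, α, B) be a quadratic Hom-Novikov superalgebra with α an automorphism, and let [x,y] = xy − (−1)^{|x||y|}yx be the sub-adjacent bracket. Then every bracket [x,y] lies in the center Z(A) = {a ∈ A : ab = ba = 0 for all b ∈ A}; consequently the sub-adjacent Hom-Lie superalgebra is 2-step nilpotent: [[x,y],[z,w]] = 0 and more generally [A,[A,A]] = 0. -/

import Mathlib

/-!
Put `T(x, y, z, w) = B(α(xy), α(zw))` for homogeneous `x, y, z, w`. Invariance of `B` and
right commutativity give `T(x, y, z, w) = ± T(x, z, y, w)`, while invariance and supersymmetry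
of `B` turn `B(α x · yz, α² w)` into `± T(w, x, y, z)`. Pairing the left-symmetry identity
with `α² w` therefore shows that `T` is supersymmetric in its first two arguments, i.e.
`B(α[x, y], α(zw)) = 0`. As `α` is onto, `B(α[x, y], uv) = 0` for all `u, v`, and invariance
with nondegeneracy turns this into `[x, y] u = u [x, y] = 0`.
-/

/-- The sub-adjacent super-commutator bracket `[x,y] = xy - (-1)^(|x||y|) yx`
for homogeneous `x` of degree `i` and `y` of degree `j`. -/
def sbr {𝕜 A : Type*} [Field 𝕜] [AddCommGroup A] [Module 𝕜 A]
    (mul : A →ₗ[𝕜] A →ₗ[𝕜] A) (i j : ZMod 2) (x y : A) : A :=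
  mul x y - ((-1 : 𝕜) ^ (i.val * j.val)) • mul y x

lemma LinearMap.eq_zero_of_iSup_eq_top {ι R M P : Type*} [Semiring R] [AddCommMonoid M]
    [Module R M] [AddCommMonoid P] [Module R P] {G : ι → Submodule R M} (hG : iSup G = ⊤)
    {g : M →ₗ[R] P} (h : ∀ i, ∀ x ∈ G i, g x = 0) : g = 0 :=
  LinearMap.ker_eq_top.mp <| top_unique <| hG ▸ iSup_le fun i x hx => h i x hx

lemma LinearMap.bilin_eq_zero_of_iSup_eq_top {ι R M P : Type*} [CommSemiring R] [AddCommMonoid M]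
    [Module R M] [AddCommMonoid P] [Module R P] {G : ι → Submodule R M} (hG : iSup G = ⊤)
    {f : M →ₗ[R] M →ₗ[R] P} (h : ∀ i j, ∀ x ∈ G i, ∀ y ∈ G j, f x y = 0) : f = 0 :=
  LinearMap.eq_zero_of_iSup_eq_top hG fun i x hx =>
    LinearMap.eq_zero_of_iSup_eq_top hG fun j y hy => h i j x hx y hy

lemma sbr_eq_zero_of_mul_eq_zero {𝕜 A : Type*} [Field 𝕜] [AddCommGroup A] [Module 𝕜 A]
    {mul : A →ₗ[𝕜] A →ₗ[𝕜] A} {x y : A} (hxy : mul x y = 0) (hyx : mul y x = 0)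
    (i j : ZMod 2) : sbr mul i j x y = 0 := by
  simp [sbr, hxy, hyx]

section QuadraticHomNovikov

variable {𝕜 A : Type*} [Field 𝕜] [AddCommGroup A] [Module 𝕜 A] {G : ZMod 2 → Submodule 𝕜 A}
  {mul : A →ₗ[𝕜] A →ₗ[𝕜] A} {α : A →ₗ[𝕜] A} {B : A →ₗ[𝕜] A →ₗ[𝕜] 𝕜}

lemma B_alpha_mul_alpha_mul_swap_middle
    (hα_mul : ∀ x y : A, α (mul x y) = mul (α x) (α y))
    (hrn : ∀ i j k : ZMod 2, ∀ x ∈ G i, ∀ y ∈ G j, ∀ z ∈ G k,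
      mul (mul x y) (α z) = ((-1 : 𝕜) ^ (j.val * k.val)) • mul (mul x z) (α y))
    (hB_inv : ∀ x y z : A, B (α x) (mul y z) = B (mul x y) (α z))
    {i j k : ZMod 2} {x y z : A} (hx : x ∈ G i) (hy : y ∈ G j) (hz : z ∈ G k) (w : A) :
    B (α (mul x y)) (α (mul z w))
      = (-1 : 𝕜) ^ (j.val * k.val) * B (α (mul x z)) (α (mul y w)) := by
  rw [hα_mul z, hB_inv, hrn i j k x hx y hy z hz, map_smul, LinearMap.smul_apply, smul_eq_mul,
    ← hB_inv, ← hα_mul]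

lemma B_mul_alpha_mul_alpha_alpha
    (hmul_even : ∀ i j : ZMod 2, ∀ x ∈ G i, ∀ y ∈ G j, mul x y ∈ G (i + j))
    (hα_even : ∀ i : ZMod 2, ∀ x ∈ G i, α x ∈ G i)
    (hα_mul : ∀ x y : A, α (mul x y) = mul (α x) (α y))
    (hB_sym : ∀ i j : ZMod 2, ∀ x ∈ G i, ∀ y ∈ G j,
      B x y = ((-1 : 𝕜) ^ (i.val * j.val)) * B y x)
    (hB_inv : ∀ x y z : A, B (α x) (mul y z) = B (mul x y) (α z))
    {i j k l : ZMod 2} {x y z w : A} (hx : x ∈ G i) (hy : y ∈ G j) (hz : z ∈ G k)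
    (hw : w ∈ G l) :
    B (mul (α x) (mul y z)) (α (α w))
      = (-1 : 𝕜) ^ ((i + (j + k)).val * l.val) * B (α (mul w x)) (α (mul y z)) := by
  have hxyz := hmul_even _ _ _ (hα_even i x hx) _ (hmul_even j k y hy z hz)
  rw [hB_sym _ _ _ hxyz _ (hα_even l _ (hα_even l w hw)), hB_inv, hα_mul w, hα_mul y]

lemma B_alpha_mul_alpha_mul_supercomm
    (hmul_even : ∀ i j : ZMod 2, ∀ x ∈ G i, ∀ y ∈ G j, mul x y ∈ G (i + j))
    (hα_even : ∀ i : ZMod 2, ∀ x ∈ G i, α x ∈ G i)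
    (hα_mul : ∀ x y : A, α (mul x y) = mul (α x) (α y))
    (hls : ∀ i j k : ZMod 2, ∀ x ∈ G i, ∀ y ∈ G j, ∀ z ∈ G k,
      mul (mul x y) (α z) - mul (α x) (mul y z)
        = ((-1 : 𝕜) ^ (i.val * j.val)) • (mul (mul y x) (α z) - mul (α y) (mul x z)))
    (hrn : ∀ i j k : ZMod 2, ∀ x ∈ G i, ∀ y ∈ G j, ∀ z ∈ G k,
      mul (mul x y) (α z) = ((-1 : 𝕜) ^ (j.val * k.val)) • mul (mul x z) (α y))
    (hB_sym : ∀ i j : ZMod 2, ∀ x ∈ G i, ∀ y ∈ G j,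
      B x y = ((-1 : 𝕜) ^ (i.val * j.val)) * B y x)
    (hB_inv : ∀ x y z : A, B (α x) (mul y z) = B (mul x y) (α z))
    {i j k l : ZMod 2} {x y z w : A} (hx : x ∈ G i) (hy : y ∈ G j) (hz : z ∈ G k)
    (hw : w ∈ G l) :
    B (α (mul x y)) (α (mul z w))
      = (-1 : 𝕜) ^ (i.val * j.val) * B (α (mul y x)) (α (mul z w)) := by
  have hmid : B (mul (α x) (mul y z)) (α (α w))
      = (-1 : 𝕜) ^ (i.val * j.val) * B (mul (α y) (mul x z)) (α (α w)) := by
    rw [B_mul_alpha_mul_alpha_alpha hmul_even hα_even hα_mul hB_sym hB_inv hx hy hz hw,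
      B_mul_alpha_mul_alpha_alpha hmul_even hα_even hα_mul hB_sym hB_inv hy hx hz hw,
      B_alpha_mul_alpha_mul_swap_middle hα_mul hrn hB_inv hw hx hy, add_left_comm j]
    ring
  have hpair : ∀ u : A, B (mul u (α z)) (α (α w)) = B (α u) (α (mul z w)) := fun u => by
    rw [← hB_inv, hα_mul]
  have hls_w := congrArg (fun u => B u (α (α w))) (hls i j k x hx y hy z hz)
  simp only [map_sub, map_smul, LinearMap.sub_apply, LinearMap.smul_apply, smul_eq_mul,
    hpair] at hls_w
  linear_combination hls_w + hmid

lemma B_alpha_sbr_alpha_mul_eq_zero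
    (hmul_even : ∀ i j : ZMod 2, ∀ x ∈ G i, ∀ y ∈ G j, mul x y ∈ G (i + j))
    (hα_even : ∀ i : ZMod 2, ∀ x ∈ G i, α x ∈ G i)
    (hα_mul : ∀ x y : A, α (mul x y) = mul (α x) (α y))
    (hls : ∀ i j k : ZMod 2, ∀ x ∈ G i, ∀ y ∈ G j, ∀ z ∈ G k,
      mul (mul x y) (α z) - mul (α x) (mul y z)
        = ((-1 : 𝕜) ^ (i.val * j.val)) • (mul (mul y x) (α z) - mul (α y) (mul x z)))
    (hrn : ∀ i j k : ZMod 2, ∀ x ∈ G i, ∀ y ∈ G j, ∀ z ∈ G k,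
      mul (mul x y) (α z) = ((-1 : 𝕜) ^ (j.val * k.val)) • mul (mul x z) (α y))
    (hB_sym : ∀ i j : ZMod 2, ∀ x ∈ G i, ∀ y ∈ G j,
      B x y = ((-1 : 𝕜) ^ (i.val * j.val)) * B y x)
    (hB_inv : ∀ x y z : A, B (α x) (mul y z) = B (mul x y) (α z))
    (hG : iSup G = ⊤) {i j : ZMod 2} {x y : A} (hx : x ∈ G i) (hy : y ∈ G j) (z w : A) :
    B (α (sbr mul i j x y)) (α (mul z w)) = 0 := by
  suffices mul.compr₂ ((B (α (sbr mul i j x y))).comp α) = 0 from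
    LinearMap.congr_fun₂ this z w
  refine LinearMap.bilin_eq_zero_of_iSup_eq_top hG fun k l z hz w hw => ?_
  simp only [sbr, LinearMap.compr₂_apply, LinearMap.comp_apply, map_sub, map_smul,
    LinearMap.sub_apply, LinearMap.smul_apply, smul_eq_mul]
  rw [B_alpha_mul_alpha_mul_supercomm hmul_even hα_even hα_mul hls hrn hB_sym hB_inv hx hy hz hw,
    sub_self]

lemma mul_eq_zero_and_mul_eq_zero_of_B_alpha_mul_eq_zero
    (hB_nd : ∀ x : A, (∀ y : A, B x y = 0) → x = 0)
    (hB_inv : ∀ x y z : A, B (α x) (mul y z) = B (mul x y) (α z))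
    (hα_surj : Function.Surjective α) {s : A} (hs : ∀ u v, B (α s) (mul u v) = 0) (b : A) :
    mul s b = 0 ∧ mul b s = 0 := by
  have hleft : ∀ b, mul s b = 0 := fun b => hB_nd _ fun c => by
    obtain ⟨c, rfl⟩ := hα_surj c
    rw [← hB_inv, hs]
  refine ⟨hleft b, hB_nd _ fun c => ?_⟩
  obtain ⟨c, rfl⟩ := hα_surj c
  rw [← hB_inv, hleft, map_zero]

end QuadraticHomNovikov

theorem stmt11_general
    (𝕜 A : Type*) [Field 𝕜] [AddCommGroup A] [Module 𝕜 A]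
    (G : ZMod 2 → Submodule 𝕜 A) (hG : DirectSum.IsInternal G)
    (mul : A →ₗ[𝕜] A →ₗ[𝕜] A) (α : A →ₗ[𝕜] A)
    (hmul_even : ∀ i j : ZMod 2, ∀ x ∈ G i, ∀ y ∈ G j, mul x y ∈ G (i + j))
    (hα_even : ∀ i : ZMod 2, ∀ x ∈ G i, α x ∈ G i)
    (hα_mul : ∀ x y : A, α (mul x y) = mul (α x) (α y))
    (hls : ∀ i j k : ZMod 2, ∀ x ∈ G i, ∀ y ∈ G j, ∀ z ∈ G k,
      mul (mul x y) (α z) - mul (α x) (mul y z)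
        = ((-1 : 𝕜) ^ (i.val * j.val)) • (mul (mul y x) (α z) - mul (α y) (mul x z)))
    (hrn : ∀ i j k : ZMod 2, ∀ x ∈ G i, ∀ y ∈ G j, ∀ z ∈ G k,
      mul (mul x y) (α z) = ((-1 : 𝕜) ^ (j.val * k.val)) • mul (mul x z) (α y))
    (B : A →ₗ[𝕜] A →ₗ[𝕜] 𝕜)
    (hB_sym : ∀ i j : ZMod 2, ∀ x ∈ G i, ∀ y ∈ G j,
      B x y = ((-1 : 𝕜) ^ (i.val * j.val)) * B y x)
    (hB_nd : ∀ x : A, (∀ y : A, B x y = 0) → x = 0)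
    (hB_inv : ∀ x y z : A, B (α x) (mul y z) = B (mul x y) (α z))
    (hα_bij : Function.Bijective α) :
    (∀ i j : ZMod 2, ∀ x ∈ G i, ∀ y ∈ G j, ∀ b : A,
      mul (sbr mul i j x y) b = 0 ∧ mul b (sbr mul i j x y) = 0) ∧
    (∀ i j k l : ZMod 2, ∀ x ∈ G i, ∀ y ∈ G j, ∀ z ∈ G k, ∀ w ∈ G l,
      sbr mul (i + j) (k + l) (sbr mul i j x y) (sbr mul k l z w) = 0) ∧
    (∀ i j k : ZMod 2, ∀ a ∈ G i, ∀ x ∈ G j, ∀ y ∈ G k,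
      sbr mul i (j + k) a (sbr mul j k x y) = 0) := by
  have hcentral : ∀ i j : ZMod 2, ∀ x ∈ G i, ∀ y ∈ G j, ∀ b : A,
      mul (sbr mul i j x y) b = 0 ∧ mul b (sbr mul i j x y) = 0 := by
    intro i j x hx y hy
    refine mul_eq_zero_and_mul_eq_zero_of_B_alpha_mul_eq_zero hB_nd hB_inv hα_bij.2 fun u v => ?_
    obtain ⟨u, rfl⟩ := hα_bij.2 u
    obtain ⟨v, rfl⟩ := hα_bij.2 v
    rw [← hα_mul]
    exact B_alpha_sbr_alpha_mul_eq_zero hmul_even hα_even hα_mul hls hrn hB_sym hB_inv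
      hG.submodule_iSup_eq_top hx hy u v
  refine ⟨hcentral, fun i j k l x hx y hy z hz w hw => ?_, fun i j k a ha x hx y hy => ?_⟩
  · have h := hcentral i j x hx y hy (sbr mul k l z w)
    exact sbr_eq_zero_of_mul_eq_zero h.1 h.2 _ _
  · have h := hcentral j k x hx y hy a
    exact sbr_eq_zero_of_mul_eq_zero h.2 h.1 _ _

theorem stmt11
    (𝕜 A : Type*) [Field 𝕜] [AddCommGroup A] [Module 𝕜 A]
    (G : ZMod 2 → Submodule 𝕜 A) (hG : DirectSum.IsInternal G)
    (mul : A →ₗ[𝕜] A →ₗ[𝕜] A) (α : A →ₗ[𝕜] A)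
    (hmul_even : ∀ i j : ZMod 2, ∀ x ∈ G i, ∀ y ∈ G j, mul x y ∈ G (i + j))
    (hα_even : ∀ i : ZMod 2, ∀ x ∈ G i, α x ∈ G i)
    (hα_mul : ∀ x y : A, α (mul x y) = mul (α x) (α y))
    (hls : ∀ i j k : ZMod 2, ∀ x ∈ G i, ∀ y ∈ G j, ∀ z ∈ G k,
      mul (mul x y) (α z) - mul (α x) (mul y z)
        = ((-1 : 𝕜) ^ (i.val * j.val)) • (mul (mul y x) (α z) - mul (α y) (mul x z)))
    (hrn : ∀ i j k : ZMod 2, ∀ x ∈ G i, ∀ y ∈ G j, ∀ z ∈ G k,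
      mul (mul x y) (α z) = ((-1 : 𝕜) ^ (j.val * k.val)) • mul (mul x z) (α y))
    (B : A →ₗ[𝕜] A →ₗ[𝕜] 𝕜)
    (hB_even : ∀ i j : ZMod 2, i ≠ j → ∀ x ∈ G i, ∀ y ∈ G j, B x y = 0)
    (hB_sym : ∀ i j : ZMod 2, ∀ x ∈ G i, ∀ y ∈ G j,
      B x y = ((-1 : 𝕜) ^ (i.val * j.val)) * B y x)
    (hB_nd : ∀ x : A, (∀ y : A, B x y = 0) → x = 0)
    (hB_inv : ∀ x y z : A, B (α x) (mul y z) = B (mul x y) (α z))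
    (hα_bij : Function.Bijective α) :
    (∀ i j : ZMod 2, ∀ x ∈ G i, ∀ y ∈ G j, ∀ b : A,
      mul (sbr mul i j x y) b = 0 ∧ mul b (sbr mul i j x y) = 0) ∧
    (∀ i j k l : ZMod 2, ∀ x ∈ G i, ∀ y ∈ G j, ∀ z ∈ G k, ∀ w ∈ G l,
      sbr mul (i + j) (k + l) (sbr mul i j x y) (sbr mul k l z w) = 0) ∧
    (∀ i j k : ZMod 2, ∀ a ∈ G i, ∀ x ∈ G j, ∀ y ∈ G k,
      sbr mul i (j + k) a (sbr mul j k x y) = 0) :=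
  stmt11_general 𝕜 A G hG mul α hmul_even hα_even hα_mul hls hrn B hB_sym hB_nd hB_inv hα_bij
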